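/- Let p be a prime number and let L be a monic differential operator of MUM type of order n with coefficients in ℚ_p[[z]], with companion matrix A and uniform part Y_L. Suppose L has a p-integral Frobenius structure Φ = (φ_{i,j})_{1≤i,j≤n}. Then Φ·Y_L(z^p) = Y_L·Φ(0), and Φ(0) is an upper triangular matrix whose diagonal entries are φ_{1,1}(0), p·φ_{1,1}(0), p^2·φ_{1,1}(0), …, p^{n−1}·φ_{1,1}(0). -/

import Mathlib

open PowerSeries

noncomputable section

/-- The derivation `δ = z d/dz` on power series: `δ(Σ aₙ zⁿ) = Σ n aₙ zⁿ`. -/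
def deltaOp {K : Type*} [Semiring K] (f : PowerSeries K) : PowerSeries K :=
  PowerSeries.mk fun k => (k : K) * PowerSeries.coeff k f

/-- Substitution `z ↦ z^m` on power series. -/
def substPow {K : Type*} [Semiring K] (m : ℕ) (f : PowerSeries K) : PowerSeries K :=
  PowerSeries.mk fun k => if k % m = 0 then PowerSeries.coeff (k / m) f else 0

/-- The Cartier operator `Λ_m : Σ aᵢ zⁱ ↦ Σ a_{im} zⁱ`. -/
def cartier {K : Type*} [Semiring K] (m : ℕ) (f : PowerSeries K) : PowerSeries K :=
  PowerSeries.mk fun k => PowerSeries.coeff (k * m) f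

/-- The action of the monic operator `L = δ^n + Σ_{i<n} aᵢ δ^i` on a power series. -/
def applyOp {K : Type*} [Semiring K] {n : ℕ} (a : Fin n → PowerSeries K)
    (y : PowerSeries K) : PowerSeries K :=
  deltaOp^[n] y + ∑ i : Fin n, a i * deltaOp^[(i : ℕ)] y

/-- `L⁽¹⁾ = Σ_{k=1}^{n} k·a_k·δ^{k−1}`, with `a_n = 1`. -/
def applyOp1 {K : Type*} [Semiring K] {n : ℕ} (a : Fin n → PowerSeries K)
    (y : PowerSeries K) : PowerSeries K :=
  (n : K) • deltaOp^[n - 1] y + ∑ i : Fin n, ((i : ℕ) : K) • (a i * deltaOp^[(i : ℕ) - 1] y)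

/-- Companion matrix of the monic operator `δ^n + Σ_{i<n} aᵢ δ^i`. -/
def companionM {K : Type*} [Ring K] {n : ℕ} (a : Fin n → PowerSeries K) :
    Matrix (Fin n) (Fin n) (PowerSeries K) :=
  Matrix.of fun i j =>
    if (i : ℕ) + 1 = n then -a j else if (j : ℕ) = (i : ℕ) + 1 then 1 else 0

/-- Evaluation of a matrix of power series at `z = 0` (entrywise constant term,
viewed again as constant power series). -/
def evalZero {K : Type*} [Semiring K] {n : ℕ} (M : Matrix (Fin n) (Fin n) (PowerSeries K)) :
    Matrix (Fin n) (Fin n) (PowerSeries K) :=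
  M.map fun f => PowerSeries.C (PowerSeries.constantCoeff f)

/-- The sequence `A_0 = I`, `A_{j+1} = δA_j + A_j (A − jI)`. -/
def Aseq {K : Type*} [CommRing K] {n : ℕ} (A : Matrix (Fin n) (Fin n) (PowerSeries K)) :
    ℕ → Matrix (Fin n) (Fin n) (PowerSeries K)
  | 0 => 1
  | j + 1 => (Aseq A j).map deltaOp +
      Aseq A j * (A - (j : K) • (1 : Matrix (Fin n) (Fin n) (PowerSeries K)))

/-- `r(L) ≥ 1`: for every real `0 < r < 1`, `‖A_j/j!‖·r^j → 0` as `j → ∞`,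
where `‖·‖` is the (entrywise supremum of the) Gauss norm. -/
def RadiusGE1 {K : Type*} [NormedField K] {n : ℕ}
    (A : Matrix (Fin n) (Fin n) (PowerSeries K)) : Prop :=
  ∀ r : ℝ, 0 < r → r < 1 → ∀ ε : ℝ, 0 < ε → ∃ J : ℕ, ∀ j : ℕ, J ≤ j →
    ∀ i i' : Fin n, ∀ k : ℕ,
      ‖PowerSeries.coeff k (Aseq A j i i')‖ * ‖((j.factorial : K))⁻¹‖ * r ^ j < ε

/-- A `p`-integral Frobenius structure for the monic operator with coefficients `a`:
a matrix `Φ ∈ Mₙ(ℤ_p[[z]])` with `det Φ ≠ 0` and `δΦ = AΦ − pΦA(z^p)`. -/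
def IsPIntFrob (p : ℕ) [Fact p.Prime] {n : ℕ} (a : Fin n → PowerSeries ℚ_[p])
    (Φ : Matrix (Fin n) (Fin n) (PowerSeries ℚ_[p])) : Prop :=
  (∀ i j : Fin n, ∀ k : ℕ, ‖PowerSeries.coeff k (Φ i j)‖ ≤ 1) ∧
  Φ.det ≠ 0 ∧
  Φ.map deltaOp =
    companionM a * Φ - (p : ℚ_[p]) • (Φ * (companionM a).map (substPow p))

/-- `exp(h) = Σ_j h^j / j!` (intended for `h` with zero constant term). -/
def psExp {K : Type*} [Field K] (h : PowerSeries K) : PowerSeries K :=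
  PowerSeries.mk fun k =>
    ∑ j ∈ Finset.range (k + 1), PowerSeries.coeff k (h ^ j) / (j.factorial : K)

/-- `(f, g)` is the canonical solution pair of the MUM operator with coefficients `a`:
`f ∈ 1 + z K[[z]]`, `g ∈ z K[[z]]`, `L(f) = 0` and `L(g) + L⁽¹⁾(f) = 0`
(equivalently, `f` and `f·Log z + g` are solutions of `L`). -/
def IsCanonicalPair {K : Type*} [Field K] {n : ℕ} (a : Fin n → PowerSeries K)
    (f g : PowerSeries K) : Prop :=
  PowerSeries.constantCoeff f = 1 ∧ PowerSeries.constantCoeff g = 0 ∧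
  applyOp a f = 0 ∧ applyOp a g + applyOp1 a f = 0

end

/-!
Write `N = A(0)`, the nilpotent shift matrix. The constant term of the Frobenius equation
`δΦ = AΦ - pΦA(z^p)` is `N Φ(0) = p Φ(0) N`; entrywise this says `φ_{i+1,j}(0) = p φ_{i,j-1}(0)`,
which forces `Φ(0)` to be upper triangular with diagonal `p^i φ_{1,1}(0)`.

The defect `D = Φ Y(z^p) - Y Φ(0)` vanishes at `0` and, thanks to `N Φ(0) = p Φ(0) N`,
satisfies `δD = AD - p D N`. Its coefficient of `z^k` then satisfies `k D_k = N D_k - p D_k N`,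
by induction on `k`; since `d ↦ N d - p d N` is nilpotent, `D_k = 0` for all `k`.
-/

section PowerSeries

variable {K : Type*} [CommRing K]

lemma coeff_deltaOp (k : ℕ) (f : K⟦X⟧) : coeff k (deltaOp f) = k * coeff k f :=
  coeff_mk _ _

noncomputable def deltaDerivation (K : Type*) [CommRing K] : Derivation K K⟦X⟧ K⟦X⟧ :=
  (X : K⟦X⟧) • derivative K

lemma coe_deltaDerivation : ⇑(deltaDerivation K) = deltaOp := by
  funext f
  ext k
  rcases k with _ | k
  · simp [deltaDerivation, coeff_deltaOp]
  · simp [deltaDerivation, coeff_deltaOp, coeff_derivative, coeff_succ_X_mul, mul_comm]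

lemma deltaOp_mul (f g : K⟦X⟧) : deltaOp (f * g) = deltaOp f * g + f * deltaOp g := by
  simp only [← coe_deltaDerivation, Derivation.leibniz, smul_eq_mul]
  ring

lemma deltaOp_sub (f g : K⟦X⟧) : deltaOp (f - g) = deltaOp f - deltaOp g := by
  simp only [← coe_deltaDerivation, map_sub]

lemma deltaOp_C (c : K) : deltaOp (C c) = 0 := by
  ext (_ | k) <;> simp [coeff_deltaOp, coeff_C]

lemma constantCoeff_deltaOp (f : K⟦X⟧) : constantCoeff (deltaOp f) = 0 := by
  rw [← coeff_zero_eq_constantCoeff_apply, coeff_deltaOp, Nat.cast_zero, zero_mul]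

lemma substPow_eq_expand {m : ℕ} (hm : m ≠ 0) :
    substPow m = ⇑(expand m hm : K⟦X⟧ →ₐ[K] K⟦X⟧) := by
  funext f
  ext k
  simp [substPow, coeff_expand, Nat.dvd_iff_mod_eq_zero]

lemma substPow_C {m : ℕ} (hm : m ≠ 0) (c : K) : substPow m (C c) = C c := by
  rw [substPow_eq_expand hm]
  exact expand_C m hm c

lemma substPow_sub (m : ℕ) (f g : K⟦X⟧) :
    substPow m (f - g) = substPow m f - substPow m g := by
  ext k
  simp only [substPow, coeff_mk, map_sub]
  split_ifs <;> simp

lemma constantCoeff_substPow (m : ℕ) (f : K⟦X⟧) :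
    constantCoeff (substPow m f) = constantCoeff f := by
  rw [← coeff_zero_eq_constantCoeff_apply, ← coeff_zero_eq_constantCoeff_apply]
  simp [substPow]

lemma deltaOp_substPow (m : ℕ) (f : K⟦X⟧) :
    deltaOp (substPow m f) = (m : K) • substPow m (deltaOp f) := by
  ext k
  simp only [substPow, coeff_deltaOp, coeff_mk, map_smul, smul_eq_mul]
  by_cases hk : k % m = 0
  · rw [if_pos hk, if_pos hk, ← mul_assoc, ← Nat.cast_mul,
      Nat.mul_div_cancel' (Nat.dvd_of_mod_eq_zero hk)]
  · simp [hk]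

end PowerSeries

namespace Matrix

open Finset

variable {K : Type*} [CommRing K] {l m n : Type*}

lemma map_deltaOp_map_substPow {q : ℕ} (M : Matrix m n K⟦X⟧) :
    (M.map (substPow q)).map deltaOp = (q : K) • (M.map deltaOp).map (substPow q) := by
  ext1 i j
  exact deltaOp_substPow q (M i j)

variable [Fintype m]

lemma map_deltaOp_mul (M : Matrix l m K⟦X⟧) (N : Matrix m n K⟦X⟧) :
    (M * N).map deltaOp = M.map deltaOp * N + M * N.map deltaOp := by
  ext1 i j
  simp only [map_apply, add_apply, mul_apply, ← Finset.sum_add_distrib, ← deltaOp_mul]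
  rw [← coe_deltaDerivation, map_sum]

lemma map_substPow_mul {q : ℕ} (hq : q ≠ 0) (M : Matrix l m K⟦X⟧) (N : Matrix m n K⟦X⟧) :
    (M * N).map (substPow q) = M.map (substPow q) * N.map (substPow q) := by
  rw [substPow_eq_expand hq]
  exact Matrix.map_mul (f := ((expand q hq : K⟦X⟧ →ₐ[K] K⟦X⟧) : K⟦X⟧ →+* K⟦X⟧))

lemma map_coeff_mul (k : ℕ) (M : Matrix l m K⟦X⟧) (N : Matrix m n K⟦X⟧) :
    (M * N).map (coeff k) =
      ∑ x ∈ antidiagonal k, M.map (coeff x.1) * N.map (coeff x.2) := by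
  ext i j
  simp only [map_apply, mul_apply, map_sum, coeff_mul, sum_apply]
  exact Finset.sum_comm

end Matrix

/-- `d ↦ N d - q d M` is nilpotent, being the difference of two commuting nilpotent operators,
so it cannot have the nonzero eigenvalue `c`. -/
lemma eq_zero_of_smul_eq_mul_sub_mul {K A : Type*} [Field K] [Ring A] [Algebra K A]
    {N M : A} (hN : IsNilpotent N) (hM : IsNilpotent M) {c : K} (hc : c ≠ 0) {d : A}
    {q : K} (h : c • d = N * d - q • (d * M)) : d = 0 := by
  set T : Module.End K A := LinearMap.mulLeft K N - q • LinearMap.mulRight K M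
  have hT : IsNilpotent T := ((LinearMap.commute_mulLeft_right N M).smul_right q).isNilpotent_sub
    ((LinearMap.isNilpotent_mulLeft_iff K N).mpr hN)
    (((LinearMap.isNilpotent_mulRight_iff K M).mpr hM).smul q)
  have hunit : IsUnit (1 - c⁻¹ • T) := (hT.smul c⁻¹).isUnit_one_sub
  have hker : (1 - c⁻¹ • T) d = 0 := by
    simp [T, ← h, smul_smul, inv_mul_cancel₀ hc]
  exact (Module.End.isUnit_iff _).mp hunit |>.injective (hker.trans (map_zero _).symm)

/-- The coefficient of `z^k` gives `k D_k = A(0) D_k - q D_k M` once the lower coefficients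
of `D` are known to vanish. -/
lemma Matrix.eq_zero_of_map_deltaOp_eq {K : Type*} [Field K] [CharZero K] {ι : Type*}
    [Fintype ι] [DecidableEq ι] {A D : Matrix ι ι K⟦X⟧} {M : Matrix ι ι K}
    (hA : IsNilpotent (A.map constantCoeff)) (hM : IsNilpotent M) {q : K}
    (hD₀ : D.map constantCoeff = 0) (hD : D.map deltaOp = A * D - q • (D * M.map C)) :
    D = 0 := by
  suffices hcoeff : ∀ k, D.map (coeff k) = 0 by
    ext i j k
    simpa using congr_fun₂ (hcoeff k) i j
  intro k
  induction k using Nat.strong_induction_on with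
  | _ k ih =>
    rcases Nat.eq_zero_or_pos k with rfl | hk
    · simpa [coeff_zero_eq_constantCoeff] using hD₀
    refine eq_zero_of_smul_eq_mul_sub_mul hA hM (c := (k : K)) (q := q)
      (Nat.cast_ne_zero.mpr hk.ne') ?_
    have hδ : (D.map deltaOp).map (coeff k) = (k : K) • D.map (coeff k) := by
      ext i j
      simp [coeff_deltaOp]
    have hAD : (A * D).map (coeff k) = A.map constantCoeff * D.map (coeff k) := by
      rw [map_coeff_mul, Finset.sum_eq_single (0, k)]
      · simp [coeff_zero_eq_constantCoeff]
      · rintro ⟨u, v⟩ huv hne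
        have hv : v < k := by
          rw [Finset.HasAntidiagonal.mem_antidiagonal] at huv
          rcases Nat.eq_zero_or_pos u with rfl | hu
          · exact absurd (by simp [← huv]) hne
          · omega
        rw [ih v hv, Matrix.mul_zero]
      · simp
    have hDM : (D * M.map C).map (coeff k) = D.map (coeff k) * M := by
      ext i j
      simp [mul_apply, coeff_mul_C]
    rw [← hδ, hD, Matrix.map_sub _ (map_sub (coeff k)), hAD,
      Matrix.map_smul _ q (map_smul (coeff k) q), hDM]

lemma evalZero_eq_map_map {K : Type*} [Semiring K] {n : ℕ} (M : Matrix (Fin n) (Fin n) K⟦X⟧) :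
    evalZero M = (M.map constantCoeff).map C :=
  rfl

section Frobenius

variable {K : Type*} [CommRing K] {ι : Type*} [Fintype ι]

lemma map_constantCoeff_of_frobenius {m : ℕ} {q : K} {A Φ : Matrix ι ι K⟦X⟧}
    (hΦ : Φ.map deltaOp = A * Φ - q • (Φ * A.map (substPow m))) :
    A.map constantCoeff * Φ.map constantCoeff =
      q • (Φ.map constantCoeff * A.map constantCoeff) := by
  have h₀ : (Φ.map deltaOp).map constantCoeff = 0 := by
    ext i j
    exact constantCoeff_deltaOp _
  have hA : (A.map (substPow m)).map constantCoeff = A.map constantCoeff := by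
    ext i j
    exact constantCoeff_substPow m _
  rwa [hΦ, Matrix.map_sub _ (map_sub _), Matrix.map_smul _ q (constantCoeff_smul · q),
    Matrix.map_mul, Matrix.map_mul, hA, sub_eq_zero] at h₀

variable [DecidableEq ι]

noncomputable def frobeniusDefect (m : ℕ) (Φ Y : Matrix ι ι K⟦X⟧) : Matrix ι ι K⟦X⟧ :=
  Φ * Y.map (substPow m) - Y * (Φ.map constantCoeff).map C

lemma map_constantCoeff_frobeniusDefect {m : ℕ} {Φ Y : Matrix ι ι K⟦X⟧}
    (hY₀ : Y.map constantCoeff = 1) : (frobeniusDefect m Φ Y).map constantCoeff = 0 := by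
  have hYm : (Y.map (substPow m)).map constantCoeff = 1 := by
    rw [← hY₀]
    ext1 i j
    exact constantCoeff_substPow m _
  have hC : ((Φ.map constantCoeff).map C).map constantCoeff = Φ.map constantCoeff := by
    ext1 i j
    exact constantCoeff_C _
  rw [frobeniusDefect, Matrix.map_sub _ (map_sub _), Matrix.map_mul, Matrix.map_mul, hYm, hY₀, hC,
    mul_one, one_mul, sub_self]

lemma map_deltaOp_frobeniusDefect {m : ℕ} (hm : m ≠ 0) {A Φ Y : Matrix ι ι K⟦X⟧}
    {N : Matrix ι ι K}
    (hΦ : Φ.map deltaOp = A * Φ - (m : K) • (Φ * A.map (substPow m)))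
    (hY : Y.map deltaOp = A * Y - Y * N.map C)
    (hNΦ : N * Φ.map constantCoeff = (m : K) • (Φ.map constantCoeff * N)) :
    (frobeniusDefect m Φ Y).map deltaOp =
      A * frobeniusDefect m Φ Y - (m : K) • (frobeniusDefect m Φ Y * N.map C) := by
  have hN : (N.map C).map (substPow m) = N.map C := by
    ext1 i j
    exact substPow_C hm _
  have hYm : (Y.map (substPow m)).map deltaOp =
      (m : K) • (A.map (substPow m) * Y.map (substPow m) - Y.map (substPow m) * N.map C) := by
    rw [Matrix.map_deltaOp_map_substPow, hY, Matrix.map_sub _ (substPow_sub m),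
      Matrix.map_substPow_mul hm, Matrix.map_substPow_mul hm, hN]
  have hC₀ : ((Φ.map constantCoeff).map C).map deltaOp = 0 := by
    ext1 i j
    exact deltaOp_C _
  -- this is what cancels the term `Y N Φ(0)` coming from `δY`
  have hNΦ' : N.map C * (Φ.map constantCoeff).map C =
      (m : K) • ((Φ.map constantCoeff).map C * N.map C) := by
    rw [← Matrix.map_mul, hNΦ,
      Matrix.map_smul _ _ (fun a => by rw [smul_eq_mul, map_mul, smul_eq_C_mul]), Matrix.map_mul]
  rw [frobeniusDefect, Matrix.map_sub _ deltaOp_sub, Matrix.map_deltaOp_mul,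
    Matrix.map_deltaOp_mul, hΦ, hYm, hY, hC₀]
  simp only [mul_sub, sub_mul, Matrix.mul_smul, Matrix.smul_mul, smul_sub, mul_zero, add_zero,
    Matrix.mul_assoc, hNΦ']
  abel

end Frobenius

section Shift

variable {K : Type*} [Semiring K] {n : ℕ}

def shiftMatrix (K : Type*) [Semiring K] (n : ℕ) : Matrix (Fin n) (Fin n) K :=
  Matrix.of fun i j => if (j : ℕ) = i + 1 then 1 else 0

lemma shiftMatrix_mul_apply (d : Matrix (Fin n) (Fin n) K) (i j : Fin n) :
    (shiftMatrix K n * d) i j = if h : (i : ℕ) + 1 < n then d ⟨i + 1, h⟩ j else 0 := by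
  rw [Matrix.mul_apply]
  split_ifs with h
  · rw [Finset.sum_eq_single ⟨i + 1, h⟩]
    · simp [shiftMatrix]
    · intro l _ hl
      have : (l : ℕ) ≠ i + 1 := fun e => hl (Fin.ext e)
      simp [shiftMatrix, this]
    · simp
  · refine Finset.sum_eq_zero fun l _ => ?_
    have : (l : ℕ) ≠ i + 1 := by omega
    simp [shiftMatrix, this]

lemma mul_shiftMatrix_apply (d : Matrix (Fin n) (Fin n) K) (i j : Fin n) :
    (d * shiftMatrix K n) i j = if h : 0 < (j : ℕ) then d i ⟨j - 1, by omega⟩ else 0 := by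
  rw [Matrix.mul_apply]
  split_ifs with h
  · rw [Finset.sum_eq_single ⟨j - 1, by omega⟩]
    · simp [shiftMatrix, Nat.sub_add_cancel h]
    · intro l _ hl
      have : (j : ℕ) ≠ l + 1 := fun e => hl (Fin.ext (by simp; omega))
      simp [shiftMatrix, this]
    · simp
  · refine Finset.sum_eq_zero fun l _ => ?_
    have : (j : ℕ) ≠ l + 1 := by omega
    simp [shiftMatrix, this]

lemma shiftMatrix_pow_apply (k : ℕ) (i j : Fin n) :
    (shiftMatrix K n ^ k) i j = if (j : ℕ) = i + k then 1 else 0 := by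
  induction k generalizing i with
  | zero => simp [Matrix.one_apply, Fin.ext_iff, eq_comm]
  | succ k ih =>
    rw [pow_succ', shiftMatrix_mul_apply]
    by_cases h : (i : ℕ) + 1 < n
    · rw [dif_pos h, ih, add_right_comm, add_assoc]
    · rw [dif_neg h, if_neg (by omega)]

lemma isNilpotent_shiftMatrix : IsNilpotent (shiftMatrix K n) := by
  refine ⟨n, Matrix.ext fun i j => ?_⟩
  rw [shiftMatrix_pow_apply, if_neg (by omega), Matrix.zero_apply]

lemma map_constantCoeff_companionM {K : Type*} [CommRing K] {a : Fin n → K⟦X⟧}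
    (ha : ∀ i, constantCoeff (a i) = 0) : (companionM a).map constantCoeff = shiftMatrix K n := by
  ext i j
  simp only [companionM, shiftMatrix, Matrix.map_apply, Matrix.of_apply]
  split_ifs <;> simp [ha]; omega

lemma apply_succ_of_shiftMatrix_mul_eq {q : K} {c : Matrix (Fin n) (Fin n) K}
    (hc : shiftMatrix K n * c = q • (c * shiftMatrix K n)) {i : ℕ} (hi : i + 1 < n) (j : Fin n) :
    c ⟨i + 1, hi⟩ j = q * if h : 0 < (j : ℕ) then c ⟨i, by omega⟩ ⟨j - 1, by omega⟩ else 0 := by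
  simpa [shiftMatrix_mul_apply, mul_shiftMatrix_apply, hi] using congr_fun₂ hc ⟨i, by omega⟩ j

lemma apply_eq_zero_of_lt_of_shiftMatrix_mul_eq {q : K} {c : Matrix (Fin n) (Fin n) K}
    (hc : shiftMatrix K n * c = q • (c * shiftMatrix K n)) {i j : Fin n} (hji : (j : ℕ) < i) :
    c i j = 0 := by
  obtain ⟨j, hj⟩ := j
  obtain ⟨_ | i, hi⟩ := i
  · simp at hji
  induction j generalizing i with
  | zero => rw [apply_succ_of_shiftMatrix_mul_eq hc hi, dif_neg (lt_irrefl 0), mul_zero]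
  | succ j ih =>
    rw [apply_succ_of_shiftMatrix_mul_eq hc hi, dif_pos j.succ_pos]
    rcases i with _ | i
    · simp at hji
    · exact mul_eq_zero_of_right _ (ih _ _ _ (by simp at hji ⊢; omega))

lemma apply_self_of_shiftMatrix_mul_eq (hn : 0 < n) {q : K} {c : Matrix (Fin n) (Fin n) K}
    (hc : shiftMatrix K n * c = q • (c * shiftMatrix K n)) (i : Fin n) :
    c i i = q ^ (i : ℕ) * c ⟨0, hn⟩ ⟨0, hn⟩ := by
  obtain ⟨i, hi⟩ := i
  induction i with
  | zero => simp
  | succ i ih =>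
    rw [apply_succ_of_shiftMatrix_mul_eq hc hi, dif_pos i.succ_pos]
    exact (congr_arg _ (ih (by omega))).trans (by rw [pow_succ', mul_assoc])

end Shift

/-- for a MUM operator with a `p`-integral Frobenius structure `Φ`,
`Φ·Y_L(z^p) = Y_L·Φ(0)`, and `Φ(0)` is upper triangular with diagonal
`φ_{1,1}(0), p·φ_{1,1}(0), …, p^{n−1}·φ_{1,1}(0)`. -/
theorem statement14 (p : ℕ) [Fact p.Prime] (n : ℕ) (hn : 0 < n)
    (a : Fin n → PowerSeries ℚ_[p])
    -- `L` is of MUM type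
    (hMUM : ∀ i, PowerSeries.constantCoeff (a i) = 0)
    -- `Y` is the uniform part of `L`
    (Y : Matrix (Fin n) (Fin n) (PowerSeries ℚ_[p]))
    (hY0 : evalZero Y = 1)
    (hYeq : Y.map deltaOp = companionM a * Y - Y * evalZero (companionM a))
    -- `Φ` is a `p`-integral Frobenius structure for `L`
    (Φ : Matrix (Fin n) (Fin n) (PowerSeries ℚ_[p])) (hΦ : IsPIntFrob p a Φ) :
    -- `Φ·Y(z^p) = Y·Φ(0)`
    Φ * Y.map (substPow p) = Y * evalZero Φ ∧
    -- `Φ(0)` is upper triangular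
    (∀ i j : Fin n, (j : ℕ) < (i : ℕ) → PowerSeries.constantCoeff (Φ i j) = 0) ∧
    -- its diagonal entries are `p^i·φ_{1,1}(0)`
    (∀ i : Fin n, PowerSeries.constantCoeff (Φ i i) =
      (p : ℚ_[p]) ^ (i : ℕ) * PowerSeries.constantCoeff (Φ ⟨0, hn⟩ ⟨0, hn⟩)) := by
  obtain ⟨-, -, hfrob⟩ := hΦ
  have hp : p ≠ 0 := (Fact.out : p.Prime).ne_zero
  have hA₀ := map_constantCoeff_companionM hMUM
  have hΦ₀ : shiftMatrix ℚ_[p] n * Φ.map constantCoeff =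
      (p : ℚ_[p]) • (Φ.map constantCoeff * shiftMatrix ℚ_[p] n) :=
    hA₀ ▸ map_constantCoeff_of_frobenius hfrob
  have hY₀ : Y.map constantCoeff = 1 := Matrix.map_injective C_injective <| by
    beta_reduce
    rw [← evalZero_eq_map_map, hY0, Matrix.map_one _ (map_zero C) (map_one C)]
  have hY : Y.map deltaOp = companionM a * Y - Y * (shiftMatrix ℚ_[p] n).map C := by
    rwa [evalZero_eq_map_map, hA₀] at hYeq
  have hD : frobeniusDefect p Φ Y = 0 :=
    Matrix.eq_zero_of_map_deltaOp_eq (hA₀ ▸ isNilpotent_shiftMatrix) isNilpotent_shiftMatrix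
      (map_constantCoeff_frobeniusDefect hY₀) (map_deltaOp_frobeniusDefect hp hfrob hY hΦ₀)
  exact ⟨sub_eq_zero.mp hD, fun _ _ => apply_eq_zero_of_lt_of_shiftMatrix_mul_eq hΦ₀,
    apply_self_of_shiftMatrix_mul_eq hn hΦ₀⟩
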